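/- arXiv:1806.01131 — 4 statements merged into one kernel-verified Lean document; each statement's English description precedes it below -/
import Mathlib

section
/- With the same hypotheses, the semi-Poisson bracket satisfies the compatibility with the module structure: {{a, b·f}} = {a,b}·f + b·{{a,f}} for all a,b ∈ A, f ∈ M, where {a,b} = (i/2)(C₁(a,b) − C₁(b,a)) is the induced Poisson bracket on A. -/
/-!
Eliminating `R₁ (b • f) a` and `R₁ (a • f) b` with the right module condition and `L₁ a (b • f)`
with the bimodule condition, everything cancels except `C₁ a b - C₁ b a` acting on `f` and `b`
times the bracket `{{a, f}}`; the two `R₁ f (a * b)` terms cancel because `A` is commutative.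
-/

section FirstOrder

variable {A M : Type*} [CommRing A] [AddCommGroup M] [Module A M]
  (C₁ : A → A → A) (L₁ : A → M → M) (R₁ : M → A → M)

theorem L₁_sub_R₁_smul_right
    (hright : ∀ a b : A, ∀ f : M, R₁ f (a * b) + C₁ a b • f = R₁ (a • f) b + b • R₁ f a)
    (hbimod : ∀ a b : A, ∀ f : M, R₁ (a • f) b + b • L₁ a f = L₁ a (b • f) + a • R₁ f b)
    (a b : A) (f : M) :
    L₁ a (b • f) - R₁ (b • f) a = (C₁ a b - C₁ b a) • f + b • (L₁ a f - R₁ f a) := by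
  have hright_ba := hright b a f
  rw [mul_comm b a] at hright_ba
  linear_combination (norm := module) -(hbimod a b f) - hright a b f + hright_ba

end FirstOrder

theorem semiPoisson_module_compat_general
    (A : Type*) [CommRing A] [Algebra ℂ A]
    (M : Type*) [AddCommGroup M] [Module ℂ M] [Module A M] [IsScalarTower ℂ A M]
    (C₁ : A → A → A) (L₁ : A → M → M) (R₁ : M → A → M)
    -- first-order term of the right module condition f ∙ (a ⋆ b) = (f ∙ a) ∙ b
    (hright : ∀ a b : A, ∀ f : M,
      R₁ f (a * b) + C₁ a b • f = R₁ (a • f) b + b • R₁ f a)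
    -- first-order term of the bimodule condition (a ∙ f) ∙ b = a ∙ (f ∙ b)
    (hbimod : ∀ a b : A, ∀ f : M,
      R₁ (a • f) b + b • L₁ a f = L₁ a (b • f) + a • R₁ f b) :
    ∀ a b : A, ∀ f : M,
      (Complex.I / 2) • (L₁ a (b • f) - R₁ (b • f) a) =
        ((Complex.I / 2) • (C₁ a b - C₁ b a)) • f +
        b • ((Complex.I / 2) • (L₁ a f - R₁ f a)) := by
  intro a b f
  rw [L₁_sub_R₁_smul_right C₁ L₁ R₁ hright hbimod, smul_add, smul_comm (Complex.I / 2) b,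
    smul_assoc]

/-- The semi-Poisson bracket satisfies
`{{a, b·f}} = {a,b}·f + b·{{a,f}}`, where `{a,b} = (i/2)(C₁(a,b) − C₁(b,a))`. -/
theorem semiPoisson_module_compat
    (A : Type*) [CommRing A] [Algebra ℂ A]
    (M : Type*) [AddCommGroup M] [Module ℂ M] [Module A M] [IsScalarTower ℂ A M]
    (C₁ : A → A → A) (L₁ : A → M → M) (R₁ : M → A → M)
    -- first-order term of the left module condition (a ⋆ b) ∙ f = a ∙ (b ∙ f)
    (hleft : ∀ a b : A, ∀ f : M,
      L₁ (a * b) f + C₁ a b • f = L₁ a (b • f) + a • L₁ b f)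
    -- first-order term of the right module condition f ∙ (a ⋆ b) = (f ∙ a) ∙ b
    (hright : ∀ a b : A, ∀ f : M,
      R₁ f (a * b) + C₁ a b • f = R₁ (a • f) b + b • R₁ f a)
    -- first-order term of the bimodule condition (a ∙ f) ∙ b = a ∙ (f ∙ b)
    (hbimod : ∀ a b : A, ∀ f : M,
      R₁ (a • f) b + b • L₁ a f = L₁ a (b • f) + a • R₁ f b) :
    ∀ a b : A, ∀ f : M,
      (Complex.I / 2) • (L₁ a (b • f) - R₁ (b • f) a) =
        ((Complex.I / 2) • (C₁ a b - C₁ b a)) • f +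
        b • ((Complex.I / 2) • (L₁ a f - R₁ f a)) :=
  semiPoisson_module_compat_general A M C₁ L₁ R₁ hright hbimod
end

section
/- The semi-Poisson bracket is invariant under bimodule equivalence: if T = id + λT₁ + O(λ²) is an equivalence between two bimodule deformations (∙,∙') and (∙̃,∙̃') of a symmetric A-bimodule M, i.e. T(a∙f) = a ∙̃ T(f) and T(f∙a) = T(f) ∙̃ a, then the first-order brackets agree: L₁(a,f) − R₁(f,a) = L̃₁(a,f) − R̃₁(f,a) for all a ∈ A, f ∈ M. -/
theorem sub_eq_sub_of_add_eq_add_of_add_eq_add {G : Type*} [AddCommGroup G] {x y l r l' r' : G}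
    (hl : x + l = l' + y) (hr : x + r = r' + y) : l - r = l' - r' := by
  rw [← add_sub_add_left_eq_sub l r x, hl, hr, add_sub_add_right_eq_sub]

/-- The semi-Poisson bracket is invariant under bimodule equivalence. -/
theorem semiPoisson_invariant_under_equivalence
    (A : Type*) [CommRing A]
    (M : Type*) [AddCommGroup M] [Module A M]
    (L₁ Lt₁ : A → M → M) (R₁ Rt₁ : M → A → M) (T₁ : M → M)
    -- first-order term of T(a ∙ f) = a ∙̃ T(f)
    (hTleft : ∀ a : A, ∀ f : M, T₁ (a • f) + L₁ a f = Lt₁ a f + a • T₁ f)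
    -- first-order term of T(f ∙ a) = T(f) ∙̃ a
    (hTright : ∀ a : A, ∀ f : M, T₁ (a • f) + R₁ f a = Rt₁ f a + a • T₁ f) :
    ∀ a : A, ∀ f : M, L₁ a f - R₁ f a = Lt₁ a f - Rt₁ f a :=
  fun a f => sub_eq_sub_of_add_eq_add_of_add_eq_add (hTleft a f) (hTright a f)
end

section
/- A fiber-preserving bimodule deformation forces equality of left and right star products: if ∙ is a left (A[[λ]],⋆)-module and ∙' a right (A[[λ]],⋆')-module structure on C∞(P)[[λ]] forming a bimodule, both fiber preserving (a ∙ 1 = pr*a and 1 ∙' a = pr*a), then pr*(a ⋆ b) = pr*(a ⋆' b) for all a,b; in particular if pr* is injective, ⋆ = ⋆'. -/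
/-- A fiber-preserving bimodule deformation with left star product ⋆ and
right star product ⋆' forces pr*(a ⋆ b) = pr*(a ⋆' b); if pr* is injective, ⋆ = ⋆'. -/
theorem fiberPreserving_bimodule_star_products_agree
    (A B : Type*)
    (star star' : A → A → A) (l : A → B → B) (r : B → A → B) (p : A → B) (one : A)
    -- bimodule compatibility (a ∙ f) ∙' b = a ∙ (f ∙' b)
    (hbimod : ∀ (a : A) (f : B) (b : A), r (l a f) b = l a (r f b))
    -- a ∙ 1 = pr* a  and  1 ∙' a = pr* a
    (hl1 : ∀ a : A, l a (p one) = p a)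
    (hr1 : ∀ a : A, r (p one) a = p a)
    -- fiber preserving: a ∙ pr* b = pr*(a ⋆ b)  and  pr* b ∙' a = pr*(b ⋆' a)
    (hfl : ∀ a b : A, l a (p b) = p (star a b))
    (hfr : ∀ a b : A, r (p b) a = p (star' b a)) :
    (∀ a b : A, p (star a b) = p (star' a b)) ∧
      (Function.Injective p → star = star') := by
  have agree : ∀ a b : A, p (star a b) = p (star' a b) := fun a b =>
    calc p (star a b) = l a (r (p one) b) := by rw [hr1, hfl]
      _ = r (l a (p one)) b := (hbimod a (p one) b).symm
      _ = p (star' a b) := by rw [hl1, hfr]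
  exact ⟨agree, fun hp => funext₂ fun a b => hp (agree a b)⟩
end

section
/- Antisymmetrization computes the cohomology class: let A be commutative and suppose every Hochschild cohomology class of HH^k(A,M) has an antisymmetric multiderivation representative (as produced by the map G̃ from the Koszul complex). Then for any k-cocycle φ, the total antisymmetrization Alt(φ) is a cocycle cohomologous to φ; in particular Alt(δψ) = 0 for all (k−1)-cochains ψ. -/
/-!
Write a Hochschild `n`-cochain `ψ` as the bar cochain
`(b₀, …, bₙ₊₁) ↦ b₀ • bₙ₊₁ • ψ (b₁, …, bₙ)`. Since `A` is commutative and acts on `M` from both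
sides by the same action, this embedding carries the Hochschild differential to the bar
differential `F ↦ ∑ᵢ (-1)ⁱ F (…, bᵢ * bᵢ₊₁, …)`, which squares to zero by associativity alone;
hence `δ ∘ δ = 0`.

The alternating sum over permutations kills every coboundary `δψ`: each inner face of `δψ` is
invariant under the transposition of the two arguments it multiplies, and the two outer faces
are exchanged by a cyclic rotation of sign `(-1)ⁿ`, which cancels them against their signs in
`δψ`. Writing `φ = η + δψ` with `Alt η = η` then gives `Alt φ = η = φ - δψ`.
-/

open Finset Equiv

section Alternatization

variable {ι α G : Type*} [Fintype ι] [DecidableEq ι] [AddCommGroup G]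

def alternatization : ((ι → α) → G) →+ ((ι → α) → G) where
  toFun f a := ∑ σ : Perm ι, Perm.sign σ • f (a ∘ σ)
  map_zero' := by ext; simp
  map_add' f g := by ext; simp [smul_add, sum_add_distrib]

theorem alternatization_apply (f : (ι → α) → G) (a : ι → α) :
    alternatization f a = ∑ σ : Perm ι, Perm.sign σ • f (a ∘ σ) :=
  rfl

theorem alternatization_comp_perm (f : (ι → α) → G) (τ : Perm ι) :
    alternatization (fun b => f (b ∘ τ)) = Perm.sign τ • alternatization f := by
  ext a
  simp only [alternatization_apply, Pi.smul_apply, smul_sum]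
  refine Fintype.sum_equiv (Equiv.mulRight τ) _ _ fun σ => ?_
  rw [coe_mulRight, Perm.sign_mul, smul_smul, mul_left_comm, Int.units_mul_self, mul_one]
  rfl

theorem alternatization_eq_zero_of_comp_swap (f : (ι → α) → G) {i j : ι} (hij : i ≠ j)
    (hf : ∀ b, f (b ∘ swap i j) = f b) : alternatization f = 0 := by
  ext a
  exact Finset.sum_involution (fun σ _ => σ * swap i j)
    (fun σ _ => by simp [Perm.sign_mul, Perm.sign_swap hij, ← Function.comp_assoc, hf])
    (fun σ _ _ => by simpa using hij) (fun σ _ => mem_univ _)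
    (fun σ _ => by simp [mul_assoc])

end Alternatization

theorem Fin.alternating_double_sum_eq_zero {G : Type*} [AddCommGroup G] {n : ℕ}
    (f : Fin (n + 2) → Fin (n + 1) → G)
    (hf : ∀ i j : Fin (n + 1), i ≤ j → f j.succ i = f i.castSucc j) :
    ∑ j : Fin (n + 2), ∑ i : Fin (n + 1), (-1 : ℤ) ^ ((j : ℕ) + i) • f j i = 0 := by
  let S : Finset (Fin (n + 2) × Fin (n + 1)) := {p | (p.1 : ℕ) ≤ p.2}
  have hS (p) : p ∈ S ↔ (p.1 : ℕ) ≤ p.2 := by simp [S]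
  have hSc (p) : p ∈ Sᶜ ↔ (p.2 : ℕ) < p.1 := by simp [S]
  rw [← sum_product', univ_product_univ, ← sum_add_sum_compl S, add_eq_zero_iff_eq_neg,
    ← sum_neg_distrib]
  -- `(j, i)` with `j ≤ i` is paired with `(i + 1, j)`, whose term has the opposite sign
  refine sum_bij' (fun p hp => (p.2.succ, p.1.castLT (by have := (hS p).1 hp; omega)))
    (fun p hp => (p.2.castSucc, p.1.pred (Fin.ne_zero_of_lt (a := p.2.castSucc) ((hSc p).1 hp))))
    (fun p hp => ?_) (fun p hp => ?_) (fun p hp => rfl) (fun p hp => by simp) (fun p hp => ?_)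
  · have := (hS p).1 hp
    rw [hSc, Fin.val_succ, Fin.val_castLT]
    omega
  · have := (hSc p).1 hp
    rw [hS, Fin.val_castSucc, Fin.val_pred]
    omega
  · obtain ⟨j, i⟩ := p
    have hji : (j : ℕ) ≤ i := (hS _).1 hp
    dsimp only
    rw [hf _ _ (Fin.le_def.2 hji), Fin.castSucc_castLT, Fin.val_succ, Fin.val_castLT, ← neg_smul,
      add_right_comm, pow_succ, mul_neg_one, neg_neg, add_comm]

theorem Fin.contractNth_contractNth_succ {α : Type*} [Semigroup α] {n : ℕ}
    (b : Fin (n + 3) → α) {i j : Fin (n + 1)} (hij : i ≤ j) :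
    Fin.contractNth i.castSucc (· * ·) (Fin.contractNth j.succ.castSucc (· * ·) b)
      = Fin.contractNth j.castSucc (· * ·) (Fin.contractNth i.castSucc.castSucc (· * ·) b) := by
  rw [Fin.le_def] at hij
  ext k
  simp only [Fin.contractNth, Fin.val_castSucc, Fin.val_succ]
  split_ifs <;> first | rfl | omega | simp [mul_assoc]

theorem Fin.contractNth_comp_swap {α : Type*} [CommMagma α] {n : ℕ} (a : Fin (n + 1) → α)
    (i : Fin n) :
    Fin.contractNth i.castSucc (· * ·) (a ∘ Equiv.swap i.castSucc i.succ)
      = Fin.contractNth i.castSucc (· * ·) a := by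
  ext k
  simp only [Fin.contractNth, Function.comp_apply, Fin.val_castSucc]
  split_ifs with hlt heq
  · rw [Equiv.swap_apply_of_ne_of_ne] <;> simp [Fin.ext_iff] <;> omega
  · obtain rfl : k = i := Fin.ext heq
    rw [Equiv.swap_apply_left, Equiv.swap_apply_right, mul_comm]
  · rw [Equiv.swap_apply_of_ne_of_ne] <;> simp [Fin.ext_iff] <;> omega

theorem Fin.init_comp_finRotate {α : Type*} {n : ℕ} (a : Fin (n + 1) → α) :
    Fin.init (a ∘ finRotate (n + 1)) = Fin.tail a := by
  ext k
  simp [Fin.init, Fin.tail, Fin.coeSucc_eq_succ]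

section Bar

variable {A M : Type*} [AddCommGroup M]

-- `Fin.contractNth (Fin.last _)` multiplies nothing, so only the indices `i.castSucc` are faces.
def barDiff [Mul A] {m : ℕ} (F : (Fin (m + 1) → A) → M) (b : Fin (m + 2) → A) : M :=
  ∑ i : Fin (m + 1), (-1 : ℤ) ^ (i : ℕ) • F (Fin.contractNth i.castSucc (· * ·) b)

theorem barDiff_barDiff [Semigroup A] {m : ℕ} (F : (Fin (m + 1) → A) → M) :
    barDiff (barDiff F) = 0 := by
  ext b
  simp only [barDiff, smul_sum, smul_smul, ← pow_add, Pi.zero_apply]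
  exact Fin.alternating_double_sum_eq_zero _ fun i j hij => by
    rw [Fin.contractNth_contractNth_succ b hij]

end Bar

section Hochschild

variable {A M : Type*} [Semiring A] [AddCommGroup M] [Module A M] {n : ℕ}

def barExtend (ψ : (Fin n → A) → M) (b : Fin (n + 2) → A) : M :=
  b 0 • b (Fin.last (n + 1)) • ψ (Fin.tail (Fin.init b))

def hochschildDiff : ((Fin n → A) → M) →+ ((Fin (n + 1) → A) → M) where
  toFun ψ a := a 0 • ψ (Fin.tail a)
      + ∑ i : Fin n, (-1 : ℤ) ^ ((i : ℕ) + 1) • ψ (Fin.contractNth i.castSucc (· * ·) a)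
      + (-1 : ℤ) ^ (n + 1) • a (Fin.last n) • ψ (Fin.init a)
  map_zero' := by ext; simp
  map_add' ψ χ := by ext; simp only [Pi.add_apply, smul_add, sum_add_distrib]; abel

theorem hochschildDiff_apply (ψ : (Fin n → A) → M) (a : Fin (n + 1) → A) :
    hochschildDiff ψ a = a 0 • ψ (Fin.tail a)
      + ∑ i : Fin n, (-1 : ℤ) ^ ((i : ℕ) + 1) • ψ (Fin.contractNth i.castSucc (· * ·) a)
      + (-1 : ℤ) ^ (n + 1) • a (Fin.last n) • ψ (Fin.init a) :=
  rfl

theorem barExtend_snoc_cons_one (f : (Fin n → A) → M) (a : Fin n → A) :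
    barExtend f (Fin.snoc (Fin.cons 1 a) 1) = f a := by
  simp [barExtend]

theorem hochschildDiff_apply_eq_neg_one_pow_smul (K : Type*) [Ring K] [Module K M]
    (ψ : (Fin n → A) → M) (a : Fin (n + 1) → A) :
    hochschildDiff ψ a = a 0 • ψ (fun i => a i.succ)
        + ∑ i : Fin n, ((-1 : K) ^ (i.1 + 1)) •
            ψ (fun j => if j.1 < i.1 then a j.castSucc
                 else if j.1 = i.1 then a i.castSucc * a i.succ else a j.succ)
        + ((-1 : K) ^ (n + 1)) • (a (Fin.last n) • ψ (fun i => a i.castSucc)) := by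
  have hsign (m : ℕ) (x : M) : (-1 : K) ^ m • x = (-1 : ℤ) ^ m • x := by
    rw [← Int.cast_smul_eq_zsmul K]
    push_cast
    rfl
  have htuple (i : Fin n) : (fun j : Fin n => if j.1 < i.1 then a j.castSucc
      else if j.1 = i.1 then a i.castSucc * a i.succ else a j.succ)
        = Fin.contractNth i.castSucc (· * ·) a := by
    ext j
    simp only [Fin.contractNth, Fin.val_castSucc]
    split_ifs with hlt heq
    · rfl
    · rw [Fin.ext heq]
    · rfl
  simp only [hsign, htuple]
  rfl

end Hochschild

section

variable {A M : Type*} [CommSemiring A] [AddCommGroup M] [Module A M] {n : ℕ}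
  (ψ : (Fin n → A) → M)

theorem barExtend_contractNth_zero (b : Fin (n + 3) → A) :
    barExtend ψ (Fin.contractNth 0 (· * ·) b)
      = b 0 • b (Fin.last _) • Fin.tail (Fin.init b) 0 • ψ (Fin.tail (Fin.tail (Fin.init b))) := by
  have htail : Fin.tail (Fin.init (Fin.contractNth 0 (· * ·) b))
      = Fin.tail (Fin.tail (Fin.init b)) := by
    ext k
    simp [Fin.tail, Fin.init, Fin.contractNth]
  have h0 : Fin.contractNth 0 (· * ·) b 0 = b 0 * b 1 :=
    Fin.contractNth_apply_of_eq _ _ _ _ rfl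
  have hl : Fin.contractNth 0 (· * ·) b (Fin.last _) = b (Fin.last _) :=
    Fin.contractNth_apply_of_gt _ _ _ _ (by simp)
  rw [barExtend, htail, h0, hl, mul_smul, smul_comm (b 1)]
  rfl

theorem barExtend_contractNth_succ_castSucc (b : Fin (n + 3) → A) (i : Fin n) :
    barExtend ψ (Fin.contractNth i.castSucc.succ.castSucc (· * ·) b)
      = b 0 • b (Fin.last _) • ψ (Fin.contractNth i.castSucc (· * ·) (Fin.tail (Fin.init b))) := by
  have htail : Fin.tail (Fin.init (Fin.contractNth i.castSucc.succ.castSucc (· * ·) b))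
      = Fin.contractNth i.castSucc (· * ·) (Fin.tail (Fin.init b)) := by
    ext k
    simp only [Fin.tail, Fin.init, Fin.contractNth, Fin.val_castSucc, Fin.val_succ]
    split_ifs <;> first | rfl | omega
  have h0 : Fin.contractNth i.castSucc.succ.castSucc (· * ·) b 0 = b 0 :=
    Fin.contractNth_apply_of_lt _ _ _ _ (by simp)
  have hl : Fin.contractNth i.castSucc.succ.castSucc (· * ·) b (Fin.last _) = b (Fin.last _) :=
    Fin.contractNth_apply_of_gt _ _ _ _ (by simp)
  rw [barExtend, htail, h0, hl]

theorem barExtend_contractNth_last (b : Fin (n + 3) → A) :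
    barExtend ψ (Fin.contractNth (Fin.last (n + 1)).castSucc (· * ·) b)
      = b 0 • b (Fin.last _) • Fin.tail (Fin.init b) (Fin.last n)
          • ψ (Fin.init (Fin.tail (Fin.init b))) := by
  have htail : Fin.tail (Fin.init (Fin.contractNth (Fin.last (n + 1)).castSucc (· * ·) b))
      = Fin.init (Fin.tail (Fin.init b)) := by
    ext k
    simp [Fin.tail, Fin.init, Fin.contractNth]
  have h0 : Fin.contractNth (Fin.last (n + 1)).castSucc (· * ·) b 0 = b 0 :=
    Fin.contractNth_apply_of_lt _ _ _ _ (by simp)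
  have hl : Fin.contractNth (Fin.last (n + 1)).castSucc (· * ·) b (Fin.last _)
      = b (Fin.last _).castSucc * b (Fin.last _) :=
    Fin.contractNth_apply_of_eq _ _ _ _ (by simp)
  rw [barExtend, htail, h0, hl, mul_smul, smul_comm (b (Fin.last _).castSucc)]
  rfl

theorem barExtend_hochschildDiff : barExtend (hochschildDiff ψ) = barDiff (barExtend ψ) := by
  ext b
  change b 0 • b (Fin.last _) • hochschildDiff ψ (Fin.tail (Fin.init b)) = _
  rw [barDiff, Fin.sum_univ_succ, Fin.sum_univ_castSucc]
  simp only [hochschildDiff_apply, smul_add, smul_sum, Fin.castSucc_zero, Fin.succ_last,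
    barExtend_contractNth_zero, barExtend_contractNth_succ_castSucc, barExtend_contractNth_last,
    smul_comm (b 0) ((-1 : ℤ) ^ _), smul_comm (b (Fin.last _)) ((-1 : ℤ) ^ _), Fin.val_zero,
    pow_zero, one_smul, Fin.val_succ, Fin.val_castSucc, Fin.val_last, add_assoc]

theorem hochschildDiff_hochschildDiff :
    hochschildDiff (hochschildDiff ψ) = 0 := by
  ext a
  rw [← barExtend_snoc_cons_one (hochschildDiff (hochschildDiff ψ)), barExtend_hochschildDiff,
    barExtend_hochschildDiff, barDiff_barDiff, Pi.zero_apply, Pi.zero_apply]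

theorem alternatization_hochschildDiff :
    alternatization (hochschildDiff ψ) = 0 := by
  let first (b : Fin (n + 1) → A) : M := b 0 • ψ (Fin.tail b)
  let inner (i : Fin n) (b : Fin (n + 1) → A) : M := ψ (Fin.contractNth i.castSucc (· * ·) b)
  let last (b : Fin (n + 1) → A) : M := b (Fin.last n) • ψ (Fin.init b)
  have hsplit : hochschildDiff ψ
      = first + ∑ i : Fin n, (-1 : ℤ) ^ ((i : ℕ) + 1) • inner i + (-1 : ℤ) ^ (n + 1) • last := by
    ext a
    simp [hochschildDiff_apply, first, inner, last]
  have hfirst : first = fun b => last (b ∘ finRotate (n + 1)) := by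
    ext b
    simp [first, last, Fin.init_comp_finRotate]
  have hinner (i : Fin n) : alternatization (inner i) = 0 :=
    alternatization_eq_zero_of_comp_swap _ (Fin.castSucc_lt_succ (i := i)).ne fun b => by
      simp only [inner, Fin.contractNth_comp_swap]
  rw [hsplit, map_add, map_add, map_sum, hfirst, alternatization_comp_perm, sign_finRotate]
  simp only [map_zsmul, hinner, smul_zero, sum_const_zero, add_zero, Units.smul_def]
  push_cast
  rw [← add_smul, pow_succ, mul_neg_one, add_neg_cancel, zero_smul]

end

theorem antisymmetrization_computes_class_general
    (K : Type*) [Field K]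
    (A : Type*) [CommRing A]
    (M : Type*) [AddCommGroup M] [Module K M] [Module A M]
    (k : ℕ)
    -- total antisymmetrization of cochains
    (Alt : ∀ {n : ℕ}, ((Fin n → A) → M) → ((Fin n → A) → M))
    (hAlt : ∀ {n : ℕ} (φ : (Fin n → A) → M) (a : Fin n → A),
      Alt φ a = (Nat.factorial n : K)⁻¹ •
        ∑ σ : Equiv.Perm (Fin n), ((Equiv.Perm.sign σ : ℤ) : K) • φ (a ∘ σ))
    -- the Hochschild differential
    (δ : ∀ {n : ℕ}, ((Fin n → A) → M) → ((Fin (n + 1) → A) → M))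
    (hδ : ∀ {n : ℕ} (φ : (Fin n → A) → M) (a : Fin (n + 1) → A),
      δ φ a = a 0 • φ (fun i => a i.succ)
        + ∑ i : Fin n, ((-1 : K) ^ (i.1 + 1)) •
            φ (fun j => if j.1 < i.1 then a j.castSucc
                 else if j.1 = i.1 then a i.castSucc * a i.succ else a j.succ)
        + ((-1 : K) ^ (n + 1)) • (a (Fin.last n) • φ (fun i => a i.castSucc)))
    -- φ is a (k+1)-cocycle with an antisymmetric representative
    (φ : (Fin (k + 1) → A) → M)
    (hcocycle : δ φ = 0)
    (hrep : ∃ (η : (Fin (k + 1) → A) → M) (ψ : (Fin k → A) → M),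
      Alt η = η ∧ ∀ a, φ a = η a + δ ψ a) :
    -- Alt kills coboundaries, and Alt(φ) is a cocycle cohomologous to φ
    (∀ ψ : (Fin k → A) → M, Alt (δ ψ) = 0) ∧
    (δ (Alt φ) = 0 ∧ ∃ χ : (Fin k → A) → M, ∀ a, Alt φ a - φ a = δ χ a) := by
  have hδ' {n : ℕ} (ψ : (Fin n → A) → M) : δ ψ = hochschildDiff ψ := by
    ext a
    rw [hδ, hochschildDiff_apply_eq_neg_one_pow_smul K]
  have hAlt' {n : ℕ} (f : (Fin n → A) → M) :
      Alt f = (Nat.factorial n : K)⁻¹ • alternatization f := by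
    ext a
    simp only [hAlt, Pi.smul_apply, alternatization_apply, Units.smul_def, Int.cast_smul_eq_zsmul]
  have hAlt_δ (ψ : (Fin k → A) → M) : Alt (δ ψ) = 0 := by
    rw [hAlt', hδ', alternatization_hochschildDiff, smul_zero]
  obtain ⟨η, ψ, hη, hφ⟩ := hrep
  have hφη : φ = η + δ ψ := funext hφ
  have hAltφ : Alt φ = η := by
    rw [hAlt', hφη, map_add, smul_add, ← hAlt', ← hAlt', hη, hAlt_δ, add_zero]
  refine ⟨hAlt_δ, ?_, -ψ, fun a => ?_⟩
  · rw [hAltφ, eq_sub_of_add_eq hφη.symm, hδ', hδ', map_sub, ← hδ', hcocycle,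
      hochschildDiff_hochschildDiff, sub_zero]
  · rw [hAltφ, hφ, hδ', hδ', map_neg, Pi.neg_apply]
    abel

/-- Antisymmetrization computes the Hochschild cohomology class.
For a commutative algebra A and a symmetric A-bimodule M (over a field K of
characteristic zero), if a Hochschild (k+1)-cocycle φ admits an antisymmetric
representative (as produced by the map G̃ from the Koszul complex), then Alt(φ) is a
cocycle cohomologous to φ; and the antisymmetrization of every Hochschild coboundary
vanishes. -/
theorem antisymmetrization_computes_class
    (K : Type*) [Field K] [CharZero K]
    (A : Type*) [CommRing A] [Algebra K A]
    (M : Type*) [AddCommGroup M] [Module K M] [Module A M] [IsScalarTower K A M]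
    (k : ℕ)
    -- total antisymmetrization of cochains
    (Alt : ∀ {n : ℕ}, ((Fin n → A) → M) → ((Fin n → A) → M))
    (hAlt : ∀ {n : ℕ} (φ : (Fin n → A) → M) (a : Fin n → A),
      Alt φ a = (Nat.factorial n : K)⁻¹ •
        ∑ σ : Equiv.Perm (Fin n), ((Equiv.Perm.sign σ : ℤ) : K) • φ (a ∘ σ))
    -- the Hochschild differential
    (δ : ∀ {n : ℕ}, ((Fin n → A) → M) → ((Fin (n + 1) → A) → M))
    (hδ : ∀ {n : ℕ} (φ : (Fin n → A) → M) (a : Fin (n + 1) → A),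
      δ φ a = a 0 • φ (fun i => a i.succ)
        + ∑ i : Fin n, ((-1 : K) ^ (i.1 + 1)) •
            φ (fun j => if j.1 < i.1 then a j.castSucc
                 else if j.1 = i.1 then a i.castSucc * a i.succ else a j.succ)
        + ((-1 : K) ^ (n + 1)) • (a (Fin.last n) • φ (fun i => a i.castSucc)))
    -- φ is a (k+1)-cocycle with an antisymmetric representative
    (φ : (Fin (k + 1) → A) → M)
    (hcocycle : δ φ = 0)
    (hrep : ∃ (η : (Fin (k + 1) → A) → M) (ψ : (Fin k → A) → M),
      Alt η = η ∧ ∀ a, φ a = η a + δ ψ a) :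
    -- Alt kills coboundaries, and Alt(φ) is a cocycle cohomologous to φ
    (∀ ψ : (Fin k → A) → M, Alt (δ ψ) = 0) ∧
    (δ (Alt φ) = 0 ∧ ∃ χ : (Fin k → A) → M, ∀ a, Alt φ a - φ a = δ χ a) :=
  antisymmetrization_computes_class_general K A M k Alt hAlt δ hδ φ hcocycle hrep
end
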